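/- Let N ≥ 1 and η : {1,...,N} → [0,1] with discrete smoothness constant L ∈ (0, 1/2) (i.e., |η_{j+1} - η_j| ≤ L for all j). Let R(r) = (1/N)(∑_{j ≤ r}(1-η_j) + ∑_{j > r} η_j), let r⋆ ∈ {1,...,N-1} minimize R, and let r̲ ≤ r⋆ < r̄ with γ₀ := R(r̲) - R(r⋆) > 0 and γ₁ := R(r̄) - R(r⋆) > 0. Set γ̄ = max(γ₀, γ₁). If r̄ - r̲ ≥ 2, then the imbalance ratio λ = (∑_{j=r̲}^{r̄} η_j)/(∑_{j=r̲}^{r̄} (1-η_j)) satisfies λ ≥ 1 - (Nγ̄ + LN)/(1.5 - 2L). -/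

import Mathlib

/-!
Over `[r̲, r̄]`, `∑ (1 - η) - ∑ η = ∑ (1 - 2η)` splits into the term at `r̲` and the blocks
`(r̲, r⋆]`, `(r⋆, r̄]`, which sum to the scaled excess risks `-Nγ₀` and `Nγ₁`. Since `η` rises by
at most `L` per step, `∑_{(r̲, r⋆]} (2η_j - 1) = Nγ₀ > 0` forces `1 - 2η_{r̲} < L (r⋆ - r̲ + 1) ≤ LN`,
so the imbalance is at most `Nγ̄ + LN`. Likewise `Nγ₁ > 0` yields some `η_j < 1/2`, so the
denominator `∑ (1 - η)` is positive. The interval has at least three points, hence either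
`∑ (1 - η) ≤ ∑ η` and `λ ≥ 1`, or `∑ (1 - η) > 3/2 ≥ 1.5 - 2L` and
`1 - λ ≤ (Nγ̄ + LN) / ∑ (1 - η)`.
-/

open Finset

/-- `N` times the risk of the threshold `r`. -/
noncomputable def scaledRisk (η : ℕ → ℝ) (N r : ℕ) : ℝ :=
  ∑ j ∈ Icc 1 r, (1 - η j) + ∑ j ∈ Icc (r + 1) N, η j

lemma scaledRisk_sub_scaledRisk (η : ℕ → ℝ) {N a b : ℕ} (hab : a ≤ b) (hbN : b ≤ N) :
    scaledRisk η N b - scaledRisk η N a = ∑ j ∈ Ioc a b, (1 - 2 * η j) := by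
  have hIcc : ∀ r, Icc 1 r = Ioc 0 r := Icc_add_one_left_eq_Ioc 0
  have hsplit : ∑ j ∈ Ioc a b, (1 - 2 * η j) = ∑ j ∈ Ioc a b, (1 - η j) - ∑ j ∈ Ioc a b, η j := by
    rw [← sum_sub_distrib]
    exact sum_congr rfl fun j _ => by ring
  simp only [scaledRisk, hIcc, Icc_add_one_left_eq_Ioc]
  rw [← sum_Ioc_consecutive (fun j => 1 - η j) (Nat.zero_le a) hab,
    ← sum_Ioc_consecutive η hab hbN, hsplit]
  ring

lemma natCast_mul_sub_eq_sum {η R : ℕ → ℝ} {N a b : ℕ} (hN : 1 ≤ N)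
    (hR : ∀ r ≤ N, R r = (1 / (N : ℝ)) * scaledRisk η N r) (hab : a ≤ b) (hbN : b ≤ N) :
    (N : ℝ) * (R b - R a) = ∑ j ∈ Ioc a b, (1 - 2 * η j) := by
  have hN' : (N : ℝ) ≠ 0 := by positivity
  rw [hR b hbN, hR a (hab.trans hbN), ← scaledRisk_sub_scaledRisk η hab hbN]
  field_simp

lemma sum_Icc_one_sub_sub_sum_Icc (η : ℕ → ℝ) {a m b : ℕ} (ham : a ≤ m) (hmb : m ≤ b) :
    ∑ j ∈ Icc a b, (1 - η j) - ∑ j ∈ Icc a b, η j =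
      (1 - 2 * η a) + (∑ j ∈ Ioc a m, (1 - 2 * η j) + ∑ j ∈ Ioc m b, (1 - 2 * η j)) := by
  have htwo : ∀ j, 1 - η j - η j = 1 - 2 * η j := fun j => by ring
  rw [← sum_sub_distrib, Icc_eq_cons_Ioc (ham.trans hmb), sum_cons,
    sum_Ioc_consecutive _ ham hmb]
  simp only [htwo]

section Smooth

variable {η : ℕ → ℝ} {L : ℝ} {a b : ℕ}

lemma le_add_mul_sub_of_succ_le (hstep : ∀ j, a ≤ j → j < b → η (j + 1) ≤ η j + L) :
    ∀ j, a ≤ j → j ≤ b → η j ≤ η a + L * ((j : ℝ) - a) := by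
  intro j haj
  induction j, haj using Nat.le_induction with
  | base => simp
  | succ j haj ih =>
    intro hjb
    have := hstep j haj hjb
    push_cast
    linarith [ih (by omega)]

lemma le_sum_one_sub_two_mul (hstep : ∀ j, a ≤ j → j < b → η (j + 1) ≤ η j + L) (hab : a ≤ b) :
    ((b : ℝ) - a) * (1 - 2 * η a) - L * (((b : ℝ) - a) * ((b : ℝ) - a + 1)) ≤
      ∑ j ∈ Ioc a b, (1 - 2 * η j) := by
  induction b, hab using Nat.le_induction with
  | base => simp
  | succ b hab ih =>
    rw [sum_Ioc_succ_top hab]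
    have hprev := ih fun j haj hjb => hstep j haj (hjb.trans b.lt_succ_self)
    have hlast := le_add_mul_sub_of_succ_le hstep (b + 1) (hab.trans b.le_succ) le_rfl
    push_cast at hlast ⊢
    nlinarith

lemma one_sub_two_mul_lt_of_sum_neg (hstep : ∀ j, a ≤ j → j < b → η (j + 1) ≤ η j + L)
    (hab : a ≤ b) (hneg : ∑ j ∈ Ioc a b, (1 - 2 * η j) < 0) :
    1 - 2 * η a < L * ((b : ℝ) - a + 1) := by
  have hlt : a < b := by
    by_contra! hba
    simp [Ioc_eq_empty_of_le hba] at hneg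
  have hm : (1 : ℝ) ≤ (b : ℝ) - a := by
    have : ((a + 1 : ℕ) : ℝ) ≤ b := by exact_mod_cast hlt
    push_cast at this
    linarith
  have := le_sum_one_sub_two_mul hstep hab
  nlinarith

end Smooth

lemma sum_one_sub_pos_of_sum_one_sub_two_mul_pos {ι : Type*} {η : ι → ℝ} {s t : Finset ι}
    (hts : t ⊆ s) (hη : ∀ j ∈ s, 0 ≤ η j ∧ η j ≤ 1) (hpos : 0 < ∑ j ∈ t, (1 - 2 * η j)) :
    0 < ∑ j ∈ s, (1 - η j) := by
  obtain ⟨j, hjt, hj⟩ :=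
    exists_lt_of_sum_lt (f := 0) (g := fun j => 1 - 2 * η j) (by simpa using hpos)
  refine sum_pos' (fun j hj => by linarith [(hη j hj).2]) ⟨j, hts hjt, ?_⟩
  linarith [(hη j (hts hjt)).1, show (0 : ℝ) < 1 - 2 * η j from hj]

lemma one_sub_div_le_div {S₀ S₁ K c : ℝ} (hS₀ : 0 < S₀) (hK : 0 ≤ K) (hc : 0 < c)
    (hsum : 2 * c ≤ S₀ + S₁) (himb : S₀ - S₁ ≤ K) :
    1 - K / c ≤ S₁ / S₀ := by
  rcases le_or_gt S₀ S₁ with hle | hgt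
  · calc 1 - K / c ≤ 1 := sub_le_self _ (div_nonneg hK hc.le)
      _ ≤ S₁ / S₀ := (one_le_div hS₀).mpr hle
  · calc 1 - K / c ≤ 1 - K / S₀ := by gcongr; linarith
      _ ≤ 1 - (S₀ - S₁) / S₀ := by gcongr
      _ = S₁ / S₀ := by field_simp; ring

theorem stmt_13_general (N : ℕ) (hN : 1 ≤ N) (η : ℕ → ℝ) (L : ℝ)
    (hη : ∀ j ∈ Finset.Icc 1 N, 0 ≤ η j ∧ η j ≤ 1)
    (hL0 : 0 < L) (hL : L < 1 / 2)
    (hsmooth : ∀ j, 1 ≤ j → j ≤ N - 1 → |η (j + 1) - η j| ≤ L)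
    (R : ℕ → ℝ)
    (hR : ∀ r ≤ N, R r = (1 / (N : ℝ)) *
      ((∑ j ∈ Finset.Icc 1 r, (1 - η j)) + ∑ j ∈ Finset.Icc (r + 1) N, η j))
    (rstar : ℕ)
    (runder rbar : ℕ) (h0 : 1 ≤ runder) (h1 : runder ≤ rstar) (h2 : rstar < rbar)
    (h3 : rbar ≤ N) (hwidth : runder + 2 ≤ rbar)
    (γ₀ γ₁ : ℝ) (hγ₀ : γ₀ = R runder - R rstar) (hγ₁ : γ₁ = R rbar - R rstar)
    (hγ₀pos : 0 < γ₀) (hγ₁pos : 0 < γ₁) :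
    (∑ j ∈ Finset.Icc runder rbar, η j) / (∑ j ∈ Finset.Icc runder rbar, (1 - η j)) ≥
      1 - ((N : ℝ) * max γ₀ γ₁ + L * N) / (1.5 - 2 * L) := by
  set S₀ := ∑ j ∈ Icc runder rbar, (1 - η j)
  set S₁ := ∑ j ∈ Icc runder rbar, η j
  have hNpos : (0 : ℝ) < N := by exact_mod_cast hN
  have hlow : ∑ j ∈ Ioc runder rstar, (1 - 2 * η j) = -(N * γ₀) := by
    rw [← natCast_mul_sub_eq_sum hN hR h1 (by omega), hγ₀]
    ring
  have hup : ∑ j ∈ Ioc rstar rbar, (1 - 2 * η j) = N * γ₁ := by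
    rw [← natCast_mul_sub_eq_sum hN hR h2.le h3, hγ₁]
  have hstart : 1 - 2 * η runder < L * ((rstar : ℝ) - runder + 1) := by
    refine one_sub_two_mul_lt_of_sum_neg (a := runder) (b := rstar) (fun j hj hj' => ?_) h1
      (by rw [hlow, neg_lt_zero]; exact mul_pos hNpos hγ₀pos)
    linarith [(abs_le.mp (hsmooth j (by omega) (by omega))).2]
  have hspan : (rstar : ℝ) - runder + 1 ≤ N := by
    rw [sub_add_eq_add_sub, sub_le_iff_le_add]
    exact_mod_cast (by omega : rstar + 1 ≤ N + runder)
  have himb : S₀ - S₁ ≤ N * max γ₀ γ₁ + L * N := by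
    rw [sum_Icc_one_sub_sub_sum_Icc η h1 h2.le, hlow, hup]
    nlinarith [le_max_right γ₀ γ₁, mul_le_mul_of_nonneg_left hspan hL0.le]
  have hS₀ : 0 < S₀ := sum_one_sub_pos_of_sum_one_sub_two_mul_pos (t := Ioc rstar rbar)
    (fun j hj => by simp only [mem_Ioc, mem_Icc] at hj ⊢; omega)
    (fun j hj => hη j (by simp only [mem_Icc] at hj ⊢; omega))
    (by rw [hup]; exact mul_pos hNpos hγ₁pos)
  have hmass : (3 : ℝ) ≤ S₀ + S₁ := by
    rw [← sum_add_distrib]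
    simp only [sub_add_cancel, sum_const, Nat.card_Icc, nsmul_eq_mul, mul_one]
    exact_mod_cast (by omega : 3 ≤ rbar + 1 - runder)
  exact one_sub_div_le_div hS₀ (by positivity) (by norm_num; linarith) (by norm_num; linarith) himb

theorem stmt_13 (N : ℕ) (hN : 1 ≤ N) (η : ℕ → ℝ) (L : ℝ)
    (hη : ∀ j ∈ Finset.Icc 1 N, 0 ≤ η j ∧ η j ≤ 1)
    (hL0 : 0 < L) (hL : L < 1 / 2)
    (hsmooth : ∀ j, 1 ≤ j → j ≤ N - 1 → |η (j + 1) - η j| ≤ L)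
    (R : ℕ → ℝ)
    (hR : ∀ r ≤ N, R r = (1 / (N : ℝ)) *
      ((∑ j ∈ Finset.Icc 1 r, (1 - η j)) + ∑ j ∈ Finset.Icc (r + 1) N, η j))
    (rstar : ℕ) (hr1 : 1 ≤ rstar) (hrN : rstar ≤ N - 1)
    (hmin : ∀ r ≤ N, R rstar ≤ R r)
    (runder rbar : ℕ) (h0 : 1 ≤ runder) (h1 : runder ≤ rstar) (h2 : rstar < rbar)
    (h3 : rbar ≤ N) (hwidth : runder + 2 ≤ rbar)
    (γ₀ γ₁ : ℝ) (hγ₀ : γ₀ = R runder - R rstar) (hγ₁ : γ₁ = R rbar - R rstar)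
    (hγ₀pos : 0 < γ₀) (hγ₁pos : 0 < γ₁) :
    (∑ j ∈ Finset.Icc runder rbar, η j) / (∑ j ∈ Finset.Icc runder rbar, (1 - η j)) ≥
      1 - ((N : ℝ) * max γ₀ γ₁ + L * N) / (1.5 - 2 * L) :=
  stmt_13_general N hN η L hη hL0 hL hsmooth R hR rstar runder rbar h0 h1 h2 h3 hwidth γ₀ γ₁ hγ₀ hγ₁
    hγ₀pos hγ₁pos
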